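/- Let h ≥ 1 and ℓ ≥ 3 be integers and set n := 2hℓ. Let G be the graph obtained from the vertex-disjoint union of a complete graph on hℓ − 1 vertices and a complete graph on hℓ + 1 vertices by adding a matching of size 2 between them (two disjoint edges, each having one endpoint in each clique). Then G is Hamiltonian, δ(G) ≥ n/2 − 2, and G contains no 2-factor consisting of exactly 2h cycles all of length ℓ. -/

import Mathlib

/-
In a 2-factor every edge lies on a cycle, so deleting one of the two matching edges keeps its ends
connected, and the detour has to cross through the other one: either no matching edge is used, or
both are and their four ends lie on one cycle `C`. Every other cycle stays inside one clique. So if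
all cycles had length `ℓ`, then `hℓ - 1 ≡ |C ∩ left| (mod ℓ)`; but either `C` lies inside the left
clique, or it has at least two vertices on each side, so that `1 ≤ |C ∩ left| ≤ ℓ - 2`.
-/

/-- `C` is a Hamilton cycle on its (whole) vertex set: a connected 2-regular graph. -/
def IsHamCycleOn {V : Type*} (C : SimpleGraph V) : Prop :=
  C.Connected ∧ ∀ v : V, (C.neighborSet v).ncard = 2

/-- `H` is a 2-factor of `G`: a spanning 2-regular subgraph of `G`
(viewed as a graph on the same vertex set). -/
def IsTwoFactor {V : Type*} (G H : SimpleGraph V) : Prop :=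
  H ≤ G ∧ ∀ v : V, (H.neighborSet v).ncard = 2

/-- The base relation for the example graph: two disjoint cliques, of orders `hℓ - 1`
and `hℓ + 1`, joined by the matching `{(inl 0, inr 0), (inl 1, inr 1)}`. -/
def exRel (h ℓ : ℕ) : (Fin (h * ℓ - 1) ⊕ Fin (h * ℓ + 1)) →
    (Fin (h * ℓ - 1) ⊕ Fin (h * ℓ + 1)) → Prop
  | Sum.inl _, Sum.inl _ => True
  | Sum.inr _, Sum.inr _ => True
  | Sum.inl a, Sum.inr b => (a.val = 0 ∧ b.val = 0) ∨ (a.val = 1 ∧ b.val = 1)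
  | Sum.inr _, Sum.inl _ => False

/-- The example graph: disjoint copies of `K_{hℓ-1}` and `K_{hℓ+1}` joined by a matching
of size 2. -/
def exGraph (h ℓ : ℕ) : SimpleGraph (Fin (h * ℓ - 1) ⊕ Fin (h * ℓ + 1)) :=
  SimpleGraph.fromRel (exRel h ℓ)

open SimpleGraph Sum

theorem exists_isHamCycleOn_of_bijective {V : Type*} {G : SimpleGraph V} {n : ℕ} [NeZero n]
    (hn : 3 ≤ n) {f : Fin n → V} (hf : f.Bijective) (hadj : ∀ i, G.Adj (f i) (f (i + 1))) :
    ∃ C ≤ G, IsHamCycleOn C := by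
  obtain ⟨k, rfl⟩ : ∃ k, n = k + 3 := ⟨n - 3, by omega⟩
  let e := Equiv.ofBijective f hf
  refine ⟨(cycleGraph (k + 3)).map e.toEmbedding, ?_,
    (Iso.map e _).connected_iff.mp cycleGraph_connected, fun v => ?_⟩
  · rintro _ _ ⟨-, i, j, hij, rfl, rfl⟩
    rcases cycleGraph_adj.mp hij with h | h
    · rw [sub_eq_iff_eq_add'.mp h]
      exact (hadj j).symm
    · rw [sub_eq_iff_eq_add'.mp h]
      exact hadj i
  · obtain ⟨i, rfl⟩ := e.surjective v
    rw [show e i = e.toEmbedding i from rfl, neighborSet_map,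
      Set.ncard_image_of_injective _ e.toEmbedding.injective, ← coe_neighborFinset,
      Set.ncard_coe_finset, card_neighborFinset_eq_degree, cycleGraph_degree_three_le]

theorem SimpleGraph.IsClique.ncard_sub_one_le_ncard_neighborSet {V : Type*} [Finite V]
    {G : SimpleGraph V} {s : Set V} (hs : G.IsClique s) {x : V} (hx : x ∈ s) :
    s.ncard - 1 ≤ (G.neighborSet x).ncard := by
  rw [← Set.ncard_sdiff_singleton_of_mem hx]
  exact Set.ncard_le_ncard fun y ⟨hy, hyx⟩ => hs hx hy (Ne.symm hyx)

theorem Set.ncard_preimage_inl_add_ncard_preimage_inr {α β : Type*} [Finite α] [Finite β]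
    (s : Set (α ⊕ β)) : (inl ⁻¹' s).ncard + (inr ⁻¹' s).ncard = s.ncard := by
  classical
  have := Fintype.ofFinite α
  have := Fintype.ofFinite β
  rw [Set.ncard_eq_toFinset_card', Set.ncard_eq_toFinset_card', Set.ncard_eq_toFinset_card',
    ← Finset.card_disjSum]
  congr 1
  ext (a | b) <;> simp

namespace SimpleGraph

variable {α β : Type*}

theorem Reachable.exists_adj_inl_inr {G : SimpleGraph (α ⊕ β)} {a : α} {b : β}
    (hr : G.Reachable (inl a) (inr b)) :
    ∃ a' b', G.Adj (inl a') (inr b') ∧ G.Reachable (inl a) (inl a') := by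
  obtain ⟨p⟩ := hr
  obtain ⟨⟨⟨x, y⟩, hxy⟩, -, ⟨hx, hax⟩, hy⟩ :=
    p.exists_boundary_dart {x | x.isLeft ∧ G.Reachable (inl a) x} ⟨rfl, .rfl⟩ (by simp)
  obtain ⟨a', rfl⟩ := isLeft_iff.mp hx
  obtain ⟨b', rfl⟩ := isRight_iff.mp <| by
    simpa using fun hy' => hy ⟨hy', hax.trans hxy.reachable⟩
  exact ⟨a', b', hxy, hax⟩

variable {H : SimpleGraph (α ⊕ β)} {a₀ a₁ : α} {b₀ b₁ : β}

theorem IsCycles.reachable_and_adj_of_adj [Finite (α ⊕ β)] (hcyc : H.IsCycles)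
    (hcross : ∀ a b, H.Adj (inl a) (inr b) → (a = a₀ ∧ b = b₀) ∨ (a = a₁ ∧ b = b₁))
    (h₀ : H.Adj (inl a₀) (inr b₀)) :
    H.Reachable (inl a₀) (inl a₁) ∧ H.Adj (inl a₁) (inr b₁) := by
  obtain ⟨a, b, hab, hr⟩ := (hcyc.reachable_deleteEdges h₀).exists_adj_inl_inr
  rw [deleteEdges_adj] at hab
  rcases hcross a b hab.1 with ⟨rfl, rfl⟩ | ⟨rfl, rfl⟩
  · exact absurd rfl hab.2
  · exact ⟨hr.mono (deleteEdges_le _), hab.1⟩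

theorem IsCycles.reachable_of_reachable_inl_inr [Finite (α ⊕ β)] (hcyc : H.IsCycles)
    (hcross : ∀ a b, H.Adj (inl a) (inr b) → (a = a₀ ∧ b = b₀) ∨ (a = a₁ ∧ b = b₁))
    {a : α} {b : β} (hr : H.Reachable (inl a) (inr b)) :
    H.Reachable (inl a) (inl a₀) ∧ H.Reachable (inl a₀) (inr b₀) ∧
      H.Reachable (inl a₀) (inr b₁) := by
  obtain ⟨a', b', hab, hr⟩ := hr.exists_adj_inl_inr
  rcases hcross a' b' hab with ⟨rfl, rfl⟩ | ⟨rfl, rfl⟩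
  · obtain ⟨h₀₁, h₁⟩ := hcyc.reachable_and_adj_of_adj hcross hab
    exact ⟨hr, hab.reachable, h₀₁.trans h₁.reachable⟩
  · obtain ⟨h₁₀, h₀⟩ :=
      hcyc.reachable_and_adj_of_adj (fun a b h => (hcross a b h).symm) hab
    exact ⟨hr.trans h₁₀, h₀.reachable, h₁₀.symm.trans hab.reachable⟩

theorem card_eq_sum_ncard_preimage_inl_supp [Fintype α] (G : SimpleGraph (α ⊕ β))
    [Fintype G.ConnectedComponent] :
    Fintype.card α = ∑ c : G.ConnectedComponent, (inl ⁻¹' c.supp).ncard := by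
  classical
  rw [← Finset.card_univ, Finset.card_eq_sum_card_fiberwise
    (f := fun a => G.connectedComponentMk (inl a)) (t := Finset.univ) (by simp)]
  refine Finset.sum_congr rfl fun c _ => ?_
  rw [Set.ncard_eq_toFinset_card']
  congr 1
  ext a
  simp

theorem IsCycles.not_dvd_card_add_one [Fintype α] [Fintype β] (hcyc : H.IsCycles)
    (hcross : ∀ a b, H.Adj (inl a) (inr b) → (a = a₀ ∧ b = b₀) ∨ (a = a₁ ∧ b = b₁))
    (hb : b₀ ≠ b₁) {ℓ : ℕ} (hℓ : 2 ≤ ℓ) (hsupp : ∀ c : H.ConnectedComponent, c.supp.ncard = ℓ) :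
    ¬ ℓ ∣ Fintype.card α + 1 := by
  classical
  have := Fintype.ofFinite H.ConnectedComponent
  intro hdvd
  set c₀ := H.connectedComponentMk (inl a₀)
  have hsplit (c : H.ConnectedComponent) :
      (inl ⁻¹' c.supp).ncard + (inr ⁻¹' c.supp).ncard = ℓ :=
    (Set.ncard_preimage_inl_add_ncard_preimage_inr c.supp).trans (hsupp c)
  have hdvd_other (c : H.ConnectedComponent) (hc : c ≠ c₀) : ℓ ∣ (inl ⁻¹' c.supp).ncard := by
    rcases (inl ⁻¹' c.supp).eq_empty_or_nonempty with hL | ⟨a, ha⟩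
    · simp [hL]
    rcases (inr ⁻¹' c.supp).eq_empty_or_nonempty with hR | ⟨b, hb⟩
    · simpa [hR] using (hsplit c).symm.dvd
    rw [Set.mem_preimage, ConnectedComponent.mem_supp_iff] at ha hb
    obtain ⟨hr, -⟩ := hcyc.reachable_of_reachable_inl_inr hcross
      (ConnectedComponent.exact (ha.trans hb.symm))
    exact absurd (ha.symm.trans (ConnectedComponent.sound hr)) hc
  have hdvd₀ : ℓ ∣ (inl ⁻¹' c₀.supp).ncard + 1 := by
    rw [card_eq_sum_ncard_preimage_inl_supp H, ← Finset.add_sum_erase _ _ (Finset.mem_univ c₀),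
      add_right_comm] at hdvd
    refine (Nat.dvd_add_left (Finset.dvd_sum fun c hc => ?_)).mp hdvd
    exact hdvd_other c (Finset.ne_of_mem_erase hc)
  have hL₀ : 1 ≤ (inl ⁻¹' c₀.supp).ncard := (Set.ncard_pos).mpr ⟨a₀, rfl⟩
  rcases (inr ⁻¹' c₀.supp).eq_empty_or_nonempty with hR | ⟨b, hb'⟩
  · have hL : (inl ⁻¹' c₀.supp).ncard = ℓ := by simpa [hR] using hsplit c₀
    rw [hL, Nat.dvd_add_self_left, Nat.dvd_one] at hdvd₀
    omega
  · rw [Set.mem_preimage, ConnectedComponent.mem_supp_iff] at hb'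
    obtain ⟨-, h₀, h₁⟩ :=
      hcyc.reachable_of_reachable_inl_inr hcross (ConnectedComponent.exact hb'.symm)
    have hR : 2 ≤ (inr ⁻¹' c₀.supp).ncard := by
      rw [← Set.ncard_pair hb]
      refine Set.ncard_le_ncard ?_
      rintro _ (rfl | rfl)
      exacts [(ConnectedComponent.sound h₀).symm, (ConnectedComponent.sound h₁).symm]
    have := Nat.le_of_dvd (by omega) hdvd₀
    have := hsplit c₀
    omega

end SimpleGraph

section exGraph

variable {h ℓ : ℕ}

@[simp]
theorem exGraph_adj_inl_inl {a b : Fin (h * ℓ - 1)} :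
    (exGraph h ℓ).Adj (inl a) (inl b) ↔ a ≠ b := by
  simp [exGraph, exRel]

@[simp]
theorem exGraph_adj_inr_inr {a b : Fin (h * ℓ + 1)} :
    (exGraph h ℓ).Adj (inr a) (inr b) ↔ a ≠ b := by
  simp [exGraph, exRel]

@[simp]
theorem exGraph_adj_inl_inr {a : Fin (h * ℓ - 1)} {b : Fin (h * ℓ + 1)} :
    (exGraph h ℓ).Adj (inl a) (inr b) ↔ (a.val = 0 ∧ b.val = 0) ∨ (a.val = 1 ∧ b.val = 1) := by
  simp [exGraph, exRel]

@[simp]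
theorem exGraph_adj_inr_inl {a : Fin (h * ℓ - 1)} {b : Fin (h * ℓ + 1)} :
    (exGraph h ℓ).Adj (inr b) (inl a) ↔ (a.val = 0 ∧ b.val = 0) ∨ (a.val = 1 ∧ b.val = 1) := by
  rw [adj_comm, exGraph_adj_inl_inr]

theorem sub_two_le_ncard_neighborSet_exGraph (x : Fin (h * ℓ - 1) ⊕ Fin (h * ℓ + 1)) :
    h * ℓ - 2 ≤ ((exGraph h ℓ).neighborSet x).ncard := by
  rcases x with a | b
  · have hs : (exGraph h ℓ).IsClique (Set.range inl) := by
      rintro _ ⟨a, rfl⟩ _ ⟨b, rfl⟩ hab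
      simpa using hab
    refine le_trans ?_ (hs.ncard_sub_one_le_ncard_neighborSet ⟨a, rfl⟩)
    rw [Set.ncard_range_of_injective inl_injective, Nat.card_eq_fintype_card, Fintype.card_fin]
    omega
  · have hs : (exGraph h ℓ).IsClique (Set.range inr) := by
      rintro _ ⟨a, rfl⟩ _ ⟨b, rfl⟩ hab
      simpa using hab
    refine le_trans ?_ (hs.ncard_sub_one_le_ncard_neighborSet ⟨b, rfl⟩)
    rw [Set.ncard_range_of_injective inr_injective, Nat.card_eq_fintype_card, Fintype.card_fin]
    omega

-- The cycle `inl 1, …, inl (m - 2), inl 0, inr 0, inr m, inr (m - 1), …, inr 1`.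
def hamOrder (m i : ℕ) : Fin (m - 1) ⊕ Fin (m + 1) :=
  if _ : i + 2 < m then inl ⟨i + 1, by omega⟩
  else if _ : i + 2 = m then inl ⟨0, by omega⟩
  else if _ : i + 1 = m then inr ⟨0, by omega⟩
  else inr ⟨2 * m - i, by omega⟩

theorem hamOrder_injOn {m i j : ℕ} (hi : i < 2 * m) (hj : j < 2 * m)
    (hij : hamOrder m i = hamOrder m j) : i = j := by
  unfold hamOrder at hij
  split_ifs at hij <;> simp only [inl.injEq, inr.injEq, Fin.mk.injEq, reduceCtorEq] at hij <;>
    omega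

theorem exGraph_adj_hamOrder (hm : 3 ≤ h * ℓ) {i : ℕ} (hi : i < 2 * (h * ℓ)) :
    (exGraph h ℓ).Adj (hamOrder (h * ℓ) i) (hamOrder (h * ℓ) ((i + 1) % (2 * (h * ℓ)))) := by
  have hnext : (i + 1) % (2 * (h * ℓ)) = i + 1 ∨
      i + 1 = 2 * (h * ℓ) ∧ (i + 1) % (2 * (h * ℓ)) = 0 := by
    obtain hlt | heq : i + 1 < 2 * (h * ℓ) ∨ i + 1 = 2 * (h * ℓ) := by omega
    exacts [.inl (Nat.mod_eq_of_lt hlt), .inr ⟨heq, heq ▸ Nat.mod_self _⟩]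
  generalize (i + 1) % (2 * (h * ℓ)) = j at hnext ⊢
  unfold hamOrder
  split_ifs <;>
    simp only [exGraph_adj_inl_inl, exGraph_adj_inr_inr, exGraph_adj_inl_inr, exGraph_adj_inr_inl,
      SimpleGraph.irrefl, ne_eq, Fin.ext_iff, and_self, true_or] <;>
    omega

theorem exists_isHamCycleOn_exGraph (hm : 3 ≤ h * ℓ) :
    ∃ C ≤ exGraph h ℓ, IsHamCycleOn C := by
  have : NeZero (2 * (h * ℓ)) := ⟨by omega⟩
  let f : Fin (2 * (h * ℓ)) → Fin (h * ℓ - 1) ⊕ Fin (h * ℓ + 1) := fun i => hamOrder (h * ℓ) i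
  have hf : f.Injective := fun i j hij => Fin.ext (hamOrder_injOn i.2 j.2 hij)
  have hcard :
      Fintype.card (Fin (2 * (h * ℓ))) = Fintype.card (Fin (h * ℓ - 1) ⊕ Fin (h * ℓ + 1)) := by
    simp only [Fintype.card_fin, Fintype.card_sum]
    omega
  refine exists_isHamCycleOn_of_bijective (by omega)
    ((Fintype.bijective_iff_injective_and_card f).mpr ⟨hf, hcard⟩) fun i => ?_
  simp only [f, Fin.val_add, Fin.val_one', Nat.add_mod_mod]
  exact exGraph_adj_hamOrder hm i.2

theorem not_forall_ncard_supp_eq_of_isTwoFactor_exGraph (hm : 3 ≤ h * ℓ)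
    (hℓ : 2 ≤ ℓ) {H : SimpleGraph (Fin (h * ℓ - 1) ⊕ Fin (h * ℓ + 1))}
    (hH : IsTwoFactor (exGraph h ℓ) H) : ¬ ∀ c : H.ConnectedComponent, c.supp.ncard = ℓ := by
  intro hsupp
  obtain ⟨hle, hdeg⟩ := hH
  have hcross (a b) (hab : H.Adj (inl a) (inr b)) :
      (a = ⟨0, by omega⟩ ∧ b = ⟨0, by omega⟩) ∨ (a = ⟨1, by omega⟩ ∧ b = ⟨1, by omega⟩) := by
    simp only [Fin.ext_iff]
    exact exGraph_adj_inl_inr.mp (hle hab)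
  have hcyc : H.IsCycles := fun v _ => hdeg v
  refine hcyc.not_dvd_card_add_one hcross (by simp) hℓ hsupp ?_
  rw [Fintype.card_fin, Nat.sub_add_cancel (by omega)]
  exact dvd_mul_left ℓ h

end exGraph

theorem stmt18 (h ℓ : ℕ) (hh : 1 ≤ h) (hℓ : 3 ≤ ℓ) :
    -- G is Hamiltonian
    (∃ C : SimpleGraph (Fin (h * ℓ - 1) ⊕ Fin (h * ℓ + 1)),
      C ≤ exGraph h ℓ ∧ IsHamCycleOn C) ∧
    -- δ(G) ≥ n/2 - 2, where n = 2hℓ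
    (∀ x, (2 * h * ℓ) / 2 - 2 ≤ ((exGraph h ℓ).neighborSet x).ncard) ∧
    -- G has no 2-factor consisting of exactly 2h cycles all of length ℓ
    ¬ ∃ H : SimpleGraph (Fin (h * ℓ - 1) ⊕ Fin (h * ℓ + 1)),
        IsTwoFactor (exGraph h ℓ) H ∧ Nat.card H.ConnectedComponent = 2 * h ∧
        ∀ c : H.ConnectedComponent, c.supp.ncard = ℓ := by
  have hm : 3 ≤ h * ℓ := le_trans hℓ (Nat.le_mul_of_pos_left ℓ hh)
  refine ⟨exists_isHamCycleOn_exGraph hm, fun x => ?_, ?_⟩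
  · rw [mul_assoc, Nat.mul_div_cancel_left _ two_pos]
    exact sub_two_le_ncard_neighborSet_exGraph x
  · rintro ⟨H, hH, -, hsupp⟩
    exact not_forall_ncard_supp_eq_of_isTwoFactor_exGraph hm (by omega) hH hsupp
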